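/- The operation ∘ on G'(r,t) is associative with two-sided identity (1,0,0), so G'(r,t) is a monoid. An element (x,y,z) ∈ G'(r,t) is invertible with respect to ∘ if and only if x is a unit of ℤ/2^{r+1} (equivalently, x is the class of an odd integer). Consequently, the group E'(r,t) of invertible elements of G'(r,t) has order 2^{r+2t+1} = 2^{t+r+min(r,t)+1}. -/

import Mathlib

/-
Associativity reduces to the fact that the doubling map `μ : ℤ/2^t → ℤ/2^{t+1}` satisfies
`μ(ab) = a·μ(b)` for any lift of `a`, because `2·2^t = 0` in `ℤ/2^{t+1}`. The first coordinate
is a monoid homomorphism to `ℤ/2^{r+1}`, so invertible elements have unit first coordinate.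
Conversely, for a unit `x`, solving `(x,y,z)∘(x⁻¹,y',z') = (1,0,0)` for `y'` and `z'` amounts to
two linear equations with coefficients `π(x) + μ(z)` and `π(x) + 2z`; these are units because
`2` is nilpotent modulo a power of `2`. A right inverse in a finite monoid is two-sided, so
`E'(r,t) ≃ (ℤ/2^{r+1})ˣ × ℤ/2^{t+1} × ℤ/2^t`, of order `2^r · 2^{t+1} · 2^t`.
-/

/-- The composition law of `[C,C]` for the elementary Chang complex `C = C^{n+2,t}_r`
with `t < r`, in coordinates `ℤ/2^{r+1} × ℤ/2^{t+1} × ℤ/2^t`: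
`(x,y,z)∘(x',y',z') = (x·x', π(x)·y' + π(x')·y + y'·μ(z), π(x)·z' + π(x')·z + 2·z·z')`,
where `π` denotes the canonical projections and `μ` the doubling map
`ℤ/2^t → ℤ/2^{t+1}`. -/
def changOp' (r t : ℕ) (htr : t ≤ r)
    (a b : ZMod (2 ^ (r + 1)) × ZMod (2 ^ (t + 1)) × ZMod (2 ^ t)) :
    ZMod (2 ^ (r + 1)) × ZMod (2 ^ (t + 1)) × ZMod (2 ^ t) :=
  (a.1 * b.1,
   ZMod.castHom (pow_dvd_pow 2 (by omega : t + 1 ≤ r + 1)) (ZMod (2 ^ (t + 1))) a.1 * b.2.1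
     + ZMod.castHom (pow_dvd_pow 2 (by omega : t + 1 ≤ r + 1)) (ZMod (2 ^ (t + 1))) b.1 * a.2.1
     + b.2.1 * (2 * (ZMod.cast a.2.2 : ZMod (2 ^ (t + 1)))),
   ZMod.castHom (pow_dvd_pow 2 (by omega : t ≤ r + 1)) (ZMod (2 ^ t)) a.1 * b.2.2
     + ZMod.castHom (pow_dvd_pow 2 (by omega : t ≤ r + 1)) (ZMod (2 ^ t)) b.1 * a.2.2
     + 2 * a.2.2 * b.2.2)

theorem ZMod.natCast_mul_cast_natCast {k n m : ℕ} [NeZero n] (h : m ∣ k * n) (x : ℕ) :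
    (k : ZMod m) * ((x : ZMod n).cast : ZMod m) = ((k * x : ℕ) : ZMod m) := by
  have hkn : (k : ZMod m) * n = 0 := mod_cast (ZMod.natCast_eq_zero_iff _ _).2 h
  conv_rhs => rw [← Nat.mod_add_div x n]
  rw [ZMod.cast_eq_val, ZMod.val_natCast]
  push_cast
  linear_combination -((x / n : ℕ) : ZMod m) * hkn

theorem ZMod.isUnit_add_two_mul {k : ℕ} {u : ZMod (2 ^ k)} (hu : IsUnit u) (c : ZMod (2 ^ k)) :
    IsUnit (u + 2 * c) := by
  have hnil : IsNilpotent (2 * c) :=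
    ⟨k, by rw [mul_pow, show (2 : ZMod (2 ^ k)) ^ k = 0 by exact_mod_cast ZMod.natCast_self _,
      zero_mul]⟩
  exact hnil.isUnit_add_left_of_commute hu (Commute.all _ _)

theorem ZMod.isUnit_iff_odd_val {k : ℕ} (hk : k ≠ 0) (x : ZMod (2 ^ k)) :
    IsUnit x ↔ Odd x.val := by
  rw [← ZMod.natCast_zmod_val x, ZMod.isUnit_natCast_iff_not_dvd_pow Nat.prime_two
    (Nat.pos_of_ne_zero hk), ZMod.natCast_zmod_val, ← even_iff_two_dvd, Nat.not_even_iff_odd]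

theorem ZMod.natCard_isUnit (n : ℕ) [NeZero n] :
    Nat.card {x : ZMod n // IsUnit x} = n.totient := by
  rw [← ZMod.card_units_eq_totient, ← Nat.card_eq_fintype_card]
  exact Nat.card_range_of_injective (f := ((↑) : (ZMod n)ˣ → ZMod n)) Units.val_injective

section

variable {r t : ℕ} (htr : t ≤ r)

theorem changOp'_assoc (a b c : ZMod (2 ^ (r + 1)) × ZMod (2 ^ (t + 1)) × ZMod (2 ^ t)) :
    changOp' r t htr (changOp' r t htr a b) c = changOp' r t htr a (changOp' r t htr b c) := by
  obtain ⟨x, y, z⟩ := a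
  obtain ⟨x', y', z'⟩ := b
  obtain ⟨x'', y'', z''⟩ := c
  obtain ⟨m, rfl⟩ := ZMod.natCast_zmod_surjective x
  obtain ⟨m', rfl⟩ := ZMod.natCast_zmod_surjective x'
  obtain ⟨m'', rfl⟩ := ZMod.natCast_zmod_surjective x''
  obtain ⟨n, rfl⟩ := ZMod.natCast_zmod_surjective z
  obtain ⟨n', rfl⟩ := ZMod.natCast_zmod_surjective z'
  obtain ⟨n'', rfl⟩ := ZMod.natCast_zmod_surjective z''
  have hdvd : 2 ^ (t + 1) ∣ 2 * 2 ^ t := (pow_succ' 2 t).dvd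
  simp only [changOp', map_mul, map_natCast, Prod.mk.injEq]
  refine ⟨by ring, ?_, by ring⟩
  rw [show (m : ZMod (2 ^ t)) * n' + m' * n + 2 * n * n'
      = ((m * n' + m' * n + 2 * n * n' : ℕ) : ZMod (2 ^ t)) by push_cast; ring]
  simp only [← Nat.cast_ofNat (R := ZMod (2 ^ (t + 1))), ZMod.natCast_mul_cast_natCast hdvd]
  push_cast
  ring

theorem changOp'_one_left (a : ZMod (2 ^ (r + 1)) × ZMod (2 ^ (t + 1)) × ZMod (2 ^ t)) :
    changOp' r t htr (1, 0, 0) a = a := by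
  simp [changOp', -ZMod.castHom_apply]

theorem changOp'_one_right (a : ZMod (2 ^ (r + 1)) × ZMod (2 ^ (t + 1)) × ZMod (2 ^ t)) :
    changOp' r t htr a (1, 0, 0) = a := by
  simp [changOp', -ZMod.castHom_apply]

theorem exists_changOp'_eq_one_of_isUnit
    {a : ZMod (2 ^ (r + 1)) × ZMod (2 ^ (t + 1)) × ZMod (2 ^ t)} (ha : IsUnit a.1) :
    ∃ b, changOp' r t htr a b = (1, 0, 0) := by
  obtain ⟨x, y, z⟩ := a
  set π := ZMod.castHom (pow_dvd_pow 2 (by omega : t + 1 ≤ r + 1)) (ZMod (2 ^ (t + 1)))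
  set ρ := ZMod.castHom (pow_dvd_pow 2 (by omega : t ≤ r + 1)) (ZMod (2 ^ t))
  have hπ : IsUnit (π x + 2 * z.cast) := ZMod.isUnit_add_two_mul (ha.map π) _
  have hρ : IsUnit (ρ x + 2 * z) := ZMod.isUnit_add_two_mul (ha.map ρ) _
  refine ⟨(x⁻¹, -(↑hπ.unit⁻¹ * (π x⁻¹ * y)), -(↑hρ.unit⁻¹ * (ρ x⁻¹ * z))), ?_⟩
  simp only [changOp', Prod.mk.injEq]
  refine ⟨ZMod.mul_inv_of_unit x ha, ?_, ?_⟩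
  · linear_combination (-(π x⁻¹ * y)) * hπ.mul_val_inv
  · linear_combination (-(ρ x⁻¹ * z)) * hρ.mul_val_inv

end

/-- `G'(r,t)`, a type synonym so that its monoid structure does not clash with that of the
product. -/
def ChangMonoid (r t : ℕ) (_ : t ≤ r) : Type :=
  ZMod (2 ^ (r + 1)) × ZMod (2 ^ (t + 1)) × ZMod (2 ^ t)

namespace ChangMonoid

variable {r t : ℕ} (htr : t ≤ r)

instance : Monoid (ChangMonoid r t htr) where
  mul := changOp' r t htr
  one := (1, 0, 0)
  mul_assoc := changOp'_assoc htr
  one_mul := changOp'_one_left htr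
  mul_one := changOp'_one_right htr

instance : Finite (ChangMonoid r t htr) :=
  inferInstanceAs (Finite (ZMod _ × ZMod _ × ZMod _))

def fst : ChangMonoid r t htr →* ZMod (2 ^ (r + 1)) where
  toFun a := Prod.fst a
  map_one' := rfl
  map_mul' _ _ := rfl

theorem isUnit_iff_isUnit_fst (a : ChangMonoid r t htr) : IsUnit a ↔ IsUnit (fst htr a) :=
  ⟨(·.map _), fun ha => isUnit_iff_exists_inv.2 (exists_changOp'_eq_one_of_isUnit htr ha)⟩

theorem natCard_isUnit : Nat.card {a : ChangMonoid r t htr // IsUnit a} = 2 ^ (r + 2 * t + 1) := by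
  have e : {a : ChangMonoid r t htr // IsUnit a}
      ≃ {x : ZMod (2 ^ (r + 1)) // IsUnit x} × ZMod (2 ^ (t + 1)) × ZMod (2 ^ t) :=
    (Equiv.subtypeEquivRight (isUnit_iff_isUnit_fst htr)).trans Equiv.prodSubtypeFstEquivSubtypeProd
  rw [Nat.card_congr e, Nat.card_prod, Nat.card_prod, ZMod.natCard_isUnit,
    Nat.totient_prime_pow_succ Nat.prime_two, Nat.card_zmod, Nat.card_zmod]
  ring

end ChangMonoid

theorem stmt4_general (r t : ℕ) (htr : t < r) :
    (∀ a b c : ZMod (2 ^ (r + 1)) × ZMod (2 ^ (t + 1)) × ZMod (2 ^ t),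
      changOp' r t htr.le (changOp' r t htr.le a b) c
        = changOp' r t htr.le a (changOp' r t htr.le b c)) ∧
    (∀ a : ZMod (2 ^ (r + 1)) × ZMod (2 ^ (t + 1)) × ZMod (2 ^ t),
      changOp' r t htr.le (1, 0, 0) a = a ∧ changOp' r t htr.le a (1, 0, 0) = a) ∧
    (∀ a : ZMod (2 ^ (r + 1)) × ZMod (2 ^ (t + 1)) × ZMod (2 ^ t),
      ((∃ b, changOp' r t htr.le a b = (1, 0, 0) ∧ changOp' r t htr.le b a = (1, 0, 0)) ↔
        IsUnit a.1)) ∧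
    (∀ a : ZMod (2 ^ (r + 1)) × ZMod (2 ^ (t + 1)) × ZMod (2 ^ t),
      IsUnit a.1 ↔ Odd a.1.val) ∧
    Nat.card {a : ZMod (2 ^ (r + 1)) × ZMod (2 ^ (t + 1)) × ZMod (2 ^ t) //
        ∃ b, changOp' r t htr.le a b = (1, 0, 0) ∧ changOp' r t htr.le b a = (1, 0, 0)}
      = 2 ^ (r + 2 * t + 1) ∧
    2 ^ (r + 2 * t + 1) = 2 ^ (t + r + min r t + 1) := by
  have isUnit_iff_exists_two_sided (a : ChangMonoid r t htr.le) :
      (∃ b, a * b = 1 ∧ b * a = 1) ↔ IsUnit a :=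
    isUnit_iff_exists.symm
  refine ⟨changOp'_assoc htr.le,
    fun a => ⟨changOp'_one_left htr.le a, changOp'_one_right htr.le a⟩,
    fun a => (isUnit_iff_exists_two_sided a).trans (ChangMonoid.isUnit_iff_isUnit_fst htr.le a),
    fun a => ZMod.isUnit_iff_odd_val r.succ_ne_zero a.1, ?_, ?_⟩
  · rw [← ChangMonoid.natCard_isUnit htr.le]
    exact Nat.card_congr (Equiv.subtypeEquivRight isUnit_iff_exists_two_sided)
  · rw [min_eq_right htr.le]
    ring

/-- For `r > t ≥ 1`, the operation `∘` on `G'(r,t) = ℤ/2^{r+1} × ℤ/2^{t+1} × ℤ/2^t` is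
associative with two-sided identity `(1,0,0)`; an element `(x,y,z)` is invertible iff
`x` is a unit of `ℤ/2^{r+1}` (equivalently, the class of an odd integer); and the group
`E'(r,t)` of invertible elements has order `2^{r+2t+1} = 2^{t+r+min(r,t)+1}`. -/
theorem stmt4 (r t : ℕ) (ht : 1 ≤ t) (htr : t < r) :
    (∀ a b c : ZMod (2 ^ (r + 1)) × ZMod (2 ^ (t + 1)) × ZMod (2 ^ t),
      changOp' r t htr.le (changOp' r t htr.le a b) c
        = changOp' r t htr.le a (changOp' r t htr.le b c)) ∧
    (∀ a : ZMod (2 ^ (r + 1)) × ZMod (2 ^ (t + 1)) × ZMod (2 ^ t),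
      changOp' r t htr.le (1, 0, 0) a = a ∧ changOp' r t htr.le a (1, 0, 0) = a) ∧
    (∀ a : ZMod (2 ^ (r + 1)) × ZMod (2 ^ (t + 1)) × ZMod (2 ^ t),
      ((∃ b, changOp' r t htr.le a b = (1, 0, 0) ∧ changOp' r t htr.le b a = (1, 0, 0)) ↔
        IsUnit a.1)) ∧
    (∀ a : ZMod (2 ^ (r + 1)) × ZMod (2 ^ (t + 1)) × ZMod (2 ^ t),
      IsUnit a.1 ↔ Odd a.1.val) ∧
    Nat.card {a : ZMod (2 ^ (r + 1)) × ZMod (2 ^ (t + 1)) × ZMod (2 ^ t) //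
        ∃ b, changOp' r t htr.le a b = (1, 0, 0) ∧ changOp' r t htr.le b a = (1, 0, 0)}
      = 2 ^ (r + 2 * t + 1) ∧
    2 ^ (r + 2 * t + 1) = 2 ^ (t + r + min r t + 1) :=
  stmt4_general r t htr
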